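/- arXiv:1610.03926 — 3 statements merged into one kernel-verified Lean document; each statement's English description precedes it below -/
import Mathlib

section
/- Let φ, ρ : [0,R] → ℝ be continuous nonnegative functions with φ(0) = 0 and φ differentiable, and suppose φ satisfies the Riccati-type differential inequality φ' + φ²/(n-1) ≤ ρ on [0,R] for some integer n ≥ 2. Then for every p > n/2 and every r ∈ [0,R], ∫₀ʳ φ^{2p} dt ≤ ((n-1)(2p-1)/(2p-n))^p · ∫₀ʳ ρ^p dt. -/
/-!
Differentiating `φ ^ (2p-1)` and inserting the Riccati inequality gives
`(φ ^ (2p-1))' ≤ (2p-1) φ^(2p-2) (ρ - φ² / c)` with `c = n - 1`. Integrating over `[0, r]`, and using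
`φ 0 = 0` and `φ r ^ (2p-1) ≥ 0`, yields `∫ φ^(2p) ≤ c ∫ φ^(2p-2) ρ`. Young's inequality with the
exponents `p / (p-1)` and `p` bounds the right-hand side by `(1 - 1/p) ∫ φ^(2p) + (c^p / p) ∫ ρ^p`,
and absorbing the first term gives `∫ φ^(2p) ≤ c^p ∫ ρ^p`, which is sharper than the claim because
`2p - n ≤ 2p - 1`.
-/

open Real intervalIntegral Set

theorem rpow_two_mul_sub_two_mul_le {p a b : ℝ} (hp : 1 < p) (ha : 0 ≤ a) (hb : 0 ≤ b) :
    a ^ (2 * p - 2) * b ≤ (p - 1) / p * a ^ (2 * p) + b ^ p / p := by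
  have hY := young_inequality_of_nonneg (rpow_nonneg ha (2 * p - 2)) hb
    (HolderConjugate.conjExponent hp).symm
  have hp1 : p - 1 ≠ 0 := by linarith
  have hexp : (2 * p - 2) * conjExponent p = 2 * p := by
    rw [conjExponent]; field_simp
  rw [← rpow_mul ha, hexp, conjExponent, div_div_eq_mul_div, mul_div_assoc] at hY
  linarith

theorem integral_rpow_le_mul_integral_of_riccati {φ ρ : ℝ → ℝ} {c r s : ℝ} (hc : 0 < c)
    (hs : 2 ≤ s) (hr : 0 ≤ r) (hφ : Differentiable ℝ φ) (hρ : ContinuousOn ρ (Icc 0 r))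
    (hφ0 : φ 0 = 0) (hφnn : ∀ t ∈ Icc 0 r, 0 ≤ φ t)
    (hriccati : ∀ t ∈ Ioo 0 r, deriv φ t + φ t ^ 2 / c ≤ ρ t) :
    ∫ t in 0..r, φ t ^ s ≤ c * ∫ t in 0..r, φ t ^ (s - 2) * ρ t := by
  -- Only an upper bound on the derivative of `φ ^ (s - 1)` is integrated, so `deriv φ` need not
  -- be integrable.
  have hpow : ∀ q : ℝ, 0 ≤ q → Continuous fun t => φ t ^ q := fun q hq =>
    hφ.continuous.rpow_const (p := q) fun _ => Or.inr hq
  have hφs := (hpow s (by linarith)).continuousOn (s := Icc 0 r)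
  have hφρ : ContinuousOn (fun t => φ t ^ (s - 2) * ρ t) (Icc 0 r) :=
    (hpow _ (by linarith)).continuousOn.mul hρ
  have hbound : ∀ t ∈ Ioo 0 r, deriv φ t * (s - 1) * φ t ^ (s - 1 - 1)
      ≤ (s - 1) * (φ t ^ (s - 2) * ρ t) - (s - 1) / c * φ t ^ s := by
    intro t ht
    have hφt := hφnn t (Ioo_subset_Icc_self ht)
    have hsplit : φ t ^ s = φ t ^ (s - 2) * φ t ^ 2 := by
      rw [← rpow_add_natCast' hφt (by push_cast; linarith)]; norm_num
    have hscaled := mul_le_mul_of_nonneg_left (hriccati t ht)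
      (mul_nonneg (by linarith : (0 : ℝ) ≤ s - 1) (rpow_nonneg hφt (s - 2)))
    rw [hsplit, show s - 1 - 1 = s - 2 by ring]
    field_simp at hscaled ⊢
    linarith
  have hFTC := sub_le_integral_of_hasDeriv_right_of_le hr
    (φ := fun t => (s - 1) * (φ t ^ (s - 2) * ρ t) - (s - 1) / c * φ t ^ s)
    (hpow (s - 1) (by linarith)).continuousOn
    (fun t _ => ((hφ t).hasDerivAt.rpow_const (Or.inr (by linarith))).hasDerivWithinAt)
    ((hφρ.const_mul (s - 1)).sub (hφs.const_mul ((s - 1) / c))).integrableOn_Icc hbound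
  rw [integral_sub ((hφρ.const_mul _).intervalIntegrable_of_Icc hr)
      ((hφs.const_mul _).intervalIntegrable_of_Icc hr), integral_const_mul, integral_const_mul,
    hφ0, zero_rpow (by linarith)] at hFTC
  have hφr : 0 ≤ φ r ^ (s - 1) := rpow_nonneg (hφnn r (right_mem_Icc.2 hr)) _
  refine le_of_mul_le_mul_left (a := (s - 1) / c) ?_ (div_pos (by linarith) hc)
  rw [← mul_assoc, div_mul_cancel₀ _ hc.ne']
  linarith

theorem integral_rpow_two_mul_le_of_riccati {φ ρ : ℝ → ℝ} {c r p : ℝ} (hc : 0 < c) (hp : 1 < p)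
    (hr : 0 ≤ r) (hφ : Differentiable ℝ φ) (hρ : ContinuousOn ρ (Icc 0 r)) (hφ0 : φ 0 = 0)
    (hφnn : ∀ t ∈ Icc 0 r, 0 ≤ φ t) (hρnn : ∀ t ∈ Icc 0 r, 0 ≤ ρ t)
    (hriccati : ∀ t ∈ Ioo 0 r, deriv φ t + φ t ^ 2 / c ≤ ρ t) :
    ∫ t in 0..r, φ t ^ (2 * p) ≤ c ^ p * ∫ t in 0..r, ρ t ^ p := by
  have hcomp := integral_rpow_le_mul_integral_of_riccati (s := 2 * p) hc (by linarith) hr hφ hρ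
    hφ0 hφnn hriccati
  have hpow : ∀ q : ℝ, 0 ≤ q → IntervalIntegrable (fun t => φ t ^ q) MeasureTheory.volume 0 r :=
    fun q hq => (hφ.continuous.rpow_const (p := q) fun _ => Or.inr hq).intervalIntegrable 0 r
  have hρp : IntervalIntegrable (fun t => ρ t ^ p) MeasureTheory.volume 0 r :=
    (hρ.rpow_const fun _ _ => Or.inr (by linarith)).intervalIntegrable_of_Icc hr
  have hyoung : c * ∫ t in 0..r, φ t ^ (2 * p - 2) * ρ t
      ≤ (p - 1) / p * (∫ t in 0..r, φ t ^ (2 * p)) + c ^ p / p * ∫ t in 0..r, ρ t ^ p := by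
    have hφρ : IntervalIntegrable (fun t => φ t ^ (2 * p - 2) * ρ t) MeasureTheory.volume 0 r :=
      ((hφ.continuous.rpow_const (p := 2 * p - 2) fun _ => Or.inr (by linarith)).continuousOn.mul
        hρ).intervalIntegrable_of_Icc hr
    have hmono := integral_mono_on hr (hφρ.const_mul c)
      (((hpow (2 * p) (by linarith)).const_mul ((p - 1) / p)).add (hρp.const_mul (c ^ p / p)))
      fun t ht => calc
        c * (φ t ^ (2 * p - 2) * ρ t) = φ t ^ (2 * p - 2) * (c * ρ t) := by ring
        _ ≤ (p - 1) / p * φ t ^ (2 * p) + (c * ρ t) ^ p / p :=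
          rpow_two_mul_sub_two_mul_le hp (hφnn t ht) (mul_nonneg hc.le (hρnn t ht))
        _ = (p - 1) / p * φ t ^ (2 * p) + c ^ p / p * ρ t ^ p := by
          rw [mul_rpow hc.le (hρnn t ht)]; ring
    rwa [integral_const_mul,
      integral_add ((hpow (2 * p) (by linarith)).const_mul _) (hρp.const_mul _),
      integral_const_mul, integral_const_mul] at hmono
  have hp0 : 0 < p := by linarith
  set I := ∫ t in 0..r, φ t ^ (2 * p)
  set B := ∫ t in 0..r, ρ t ^ p
  have hexpand : (p - 1) / p * I + c ^ p / p * B = I - I / p + c ^ p * B / p := by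
    field_simp
  have habsorb := hcomp.trans hyoung
  exact (div_le_div_iff_of_pos_right hp0).1 (by linarith)

theorem riccati_integral_comparison_general
    (n : ℕ) (hn : 2 ≤ n) (R : ℝ)
    (φ ρ : ℝ → ℝ)
    (hρc : ContinuousOn ρ (Set.Icc 0 R))
    (hφ0 : φ 0 = 0) (hφd : Differentiable ℝ φ)
    (hφnn : ∀ t ∈ Set.Icc (0:ℝ) R, 0 ≤ φ t)
    (hρnn : ∀ t ∈ Set.Icc (0:ℝ) R, 0 ≤ ρ t)
    (hriccati : ∀ t ∈ Set.Icc (0:ℝ) R,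
      deriv φ t + (φ t) ^ 2 / ((n : ℝ) - 1) ≤ ρ t)
    (p : ℝ) (hp : p > (n : ℝ) / 2) :
    ∀ r ∈ Set.Icc (0:ℝ) R,
      ∫ t in (0:ℝ)..r, (φ t) ^ (2 * p)
        ≤ (((n : ℝ) - 1) * (2 * p - 1) / (2 * p - n)) ^ p *
            ∫ t in (0:ℝ)..r, (ρ t) ^ p := by
  rintro r ⟨hr0, hrR⟩
  have hn' : (2 : ℝ) ≤ n := by exact_mod_cast hn
  have hIcc : Icc 0 r ⊆ Icc 0 R := Icc_subset_Icc_right hrR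
  have hsharp := integral_rpow_two_mul_le_of_riccati (c := (n : ℝ) - 1) (p := p)
    (by linarith) (by linarith) hr0 hφd (hρc.mono hIcc) hφ0 (fun t ht => hφnn t (hIcc ht)) (fun t ht => hρnn t (hIcc ht))
    (fun t ht => hriccati t (hIcc (Ioo_subset_Icc_self ht)))
  refine hsharp.trans (mul_le_mul_of_nonneg_right ?_ ?_)
  · refine rpow_le_rpow (by linarith) ?_ (by linarith)
    rw [le_div_iff₀ (by linarith)]
    nlinarith
  · exact integral_nonneg hr0 fun t ht => rpow_nonneg (hρnn t (hIcc ht)) p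

theorem riccati_integral_comparison
    (n : ℕ) (hn : 2 ≤ n) (R : ℝ) (hR : 0 ≤ R)
    (φ ρ : ℝ → ℝ)
    (hφc : ContinuousOn φ (Set.Icc 0 R)) (hρc : ContinuousOn ρ (Set.Icc 0 R))
    (hφ0 : φ 0 = 0) (hφd : Differentiable ℝ φ)
    (hφnn : ∀ t ∈ Set.Icc (0:ℝ) R, 0 ≤ φ t)
    (hρnn : ∀ t ∈ Set.Icc (0:ℝ) R, 0 ≤ ρ t)
    (hriccati : ∀ t ∈ Set.Icc (0:ℝ) R,
      deriv φ t + (φ t) ^ 2 / ((n : ℝ) - 1) ≤ ρ t)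
    (p : ℝ) (hp : p > (n : ℝ) / 2) :
    ∀ r ∈ Set.Icc (0:ℝ) R,
      ∫ t in (0:ℝ)..r, (φ t) ^ (2 * p)
        ≤ (((n : ℝ) - 1) * (2 * p - 1) / (2 * p - n)) ^ p *
            ∫ t in (0:ℝ)..r, (ρ t) ^ p :=
  riccati_integral_comparison_general n hn R φ ρ hρc hφ0 hφd hφnn hρnn hriccati p hp
end

section
/- Let φ, ρ : [0,R] → ℝ be continuous nonnegative functions with φ(0) = 0 and φ differentiable, satisfying φ' + φ²/(n-1) ≤ ρ on [0,R] for some integer n ≥ 2. Then for every p > n/2 and every r ∈ [0,R], φ(r)^{2p-1} ≤ (2p-1)^p · ((n-1)/(2p-n))^{p-1} · ∫₀ʳ ρ^p dt. -/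
/-!
Multiplying the Riccati inequality by `(2p-1) φ^(2p-2)` gives
`(φ^(2p-1))' ≤ (2p-1) (ρ φ^(2p-2) - φ^(2p)/(n-1))`. Young's inequality with exponents `p` and
`p/(p-1)`, weighted so that the `φ^(2p)` it produces is absorbed by the negative term, bounds the
right-hand side pointwise by `(2p-1) (n-1)^(p-1) ρ^p`. Integrating from `φ 0 = 0` yields the claim
with the constant `(2p-1) (n-1)^(p-1)`, which is at most the stated one because `2p-n ≤ 2p-1`.
-/

open Real intervalIntegral

lemma mul_rpow_sub_one_le {a y c p : ℝ} (ha : 0 ≤ a) (hy : 0 ≤ y) (hc : 0 < c) (hp : 1 < p) :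
    a * y ^ (p - 1) ≤ c ^ (p - 1) * a ^ p / p + (p - 1) / p * (y ^ p / c) := by
  have hp0 : 0 < p := by linarith
  -- weighted AM-GM for `c^(p-1) a^p` and `y^p / c` with weights `1/p` and `(p-1)/p`
  have key := geom_mean_le_arith_mean2_weighted (w₁ := 1 / p) (w₂ := (p - 1) / p)
    (by positivity) (div_nonneg (by linarith) hp0.le)
    (by positivity : 0 ≤ c ^ (p - 1) * a ^ p) (by positivity : 0 ≤ y ^ p / c)
    (by field_simp; ring)
  have hfirst : (c ^ (p - 1) * a ^ p) ^ (1 / p) = c ^ ((p - 1) / p) * a := by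
    rw [mul_rpow (by positivity) (by positivity), ← rpow_mul hc.le, ← rpow_mul ha,
      mul_one_div, mul_one_div_cancel hp0.ne', rpow_one]
  have hsecond : (y ^ p / c) ^ ((p - 1) / p) = y ^ (p - 1) / c ^ ((p - 1) / p) := by
    rw [div_rpow (by positivity) hc.le, ← rpow_mul hy, mul_div_cancel₀ _ hp0.ne']
  rw [hfirst, hsecond] at key
  have hcpos : 0 < c ^ ((p - 1) / p) := by positivity
  calc a * y ^ (p - 1) = c ^ ((p - 1) / p) * a * (y ^ (p - 1) / c ^ ((p - 1) / p)) := by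
        field_simp
    _ ≤ _ := key
    _ = _ := by ring

lemma rpow_mul_le_of_riccati {x ρ d c p : ℝ} (hx : 0 ≤ x) (hρ : 0 ≤ ρ) (hc : 0 < c)
    (hp : 1 < p) (h : d + x ^ 2 / c ≤ ρ) : x ^ (2 * p - 2) * d ≤ c ^ (p - 1) * ρ ^ p := by
  have hsq : ∀ s : ℝ, x ^ (2 * s) = (x ^ 2) ^ s := fun s => by
    rw [← rpow_natCast, ← rpow_mul hx]; norm_num
  have hpow : x ^ (2 * p - 2) * x ^ 2 = x ^ (2 * p) := by
    rw [← rpow_natCast, ← rpow_add' hx (by norm_num; linarith)]; norm_num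
  have hyoung := mul_rpow_sub_one_le hρ (sq_nonneg x) hc hp
  have hρp : c ^ (p - 1) * ρ ^ p / p ≤ c ^ (p - 1) * ρ ^ p := div_le_self (by positivity) hp.le
  have hxp : (p - 1) / p * ((x ^ 2) ^ p / c) ≤ (x ^ 2) ^ p / c :=
    mul_le_of_le_one_left (by positivity) (by rw [div_le_one (by linarith)]; linarith)
  calc x ^ (2 * p - 2) * d ≤ x ^ (2 * p - 2) * (ρ - x ^ 2 / c) :=
        mul_le_mul_of_nonneg_left (by linarith) (by positivity)
    _ = ρ * (x ^ 2) ^ (p - 1) - (x ^ 2) ^ p / c := by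
        rw [← hsq, ← hsq, mul_sub, ← hpow]; ring_nf
    _ ≤ c ^ (p - 1) * ρ ^ p := by linarith

open Set MeasureTheory in
lemma rpow_le_integral_of_riccati {φ ρ : ℝ → ℝ} {r c p : ℝ} (hr : 0 ≤ r) (hc : 0 < c)
    (hp : 1 < p) (hφc : ContinuousOn φ (Icc 0 r))
    (hφd : ∀ t ∈ Ioo 0 r, DifferentiableAt ℝ φ t)
    (hρc : ContinuousOn ρ (Icc 0 r)) (hφ0 : φ 0 = 0)
    (hφnn : ∀ t ∈ Icc 0 r, 0 ≤ φ t) (hρnn : ∀ t ∈ Icc 0 r, 0 ≤ ρ t)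
    (hriccati : ∀ t ∈ Icc 0 r, deriv φ t + φ t ^ 2 / c ≤ ρ t) :
    φ r ^ (2 * p - 1) ≤ (2 * p - 1) * c ^ (p - 1) * ∫ t in 0..r, ρ t ^ p := by
  have hderiv : ∀ t ∈ Ioo 0 r, HasDerivAt (fun t => φ t ^ (2 * p - 1))
      ((2 * p - 1) * φ t ^ (2 * p - 2) * deriv φ t) t := fun t ht => by
    have h := (hasDerivAt_rpow_const (p := 2 * p - 1) (Or.inr (by linarith))).comp t
      (hφd t ht).hasDerivAt
    rwa [show 2 * p - 1 - 1 = 2 * p - 2 by ring] at h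
  have hderiv_le : ∀ t ∈ Ioo 0 r,
      (2 * p - 1) * φ t ^ (2 * p - 2) * deriv φ t ≤ (2 * p - 1) * c ^ (p - 1) * ρ t ^ p :=
    fun t ht => by
      have ht' := Ioo_subset_Icc_self ht
      rw [mul_assoc, mul_assoc]
      exact mul_le_mul_of_nonneg_left
        (rpow_mul_le_of_riccati (hφnn t ht') (hρnn t ht') hc hp (hriccati t ht')) (by linarith)
  have hint : IntegrableOn (fun t => (2 * p - 1) * c ^ (p - 1) * ρ t ^ p) (Icc 0 r) :=
    (continuousOn_const.mul
      ((continuous_rpow_const (by linarith : 0 ≤ p)).comp_continuousOn hρc)).integrableOn_Icc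
  have hbound := sub_le_integral_of_hasDeriv_right_of_le hr
    ((continuous_rpow_const (by linarith : 0 ≤ 2 * p - 1)).comp_continuousOn hφc)
    (fun t ht => (hderiv t ht).hasDerivWithinAt) hint hderiv_le
  rwa [Function.comp_apply, Function.comp_apply, hφ0, zero_rpow (by linarith), sub_zero,
    intervalIntegral.integral_const_mul] at hbound

lemma mul_rpow_sub_one_le_rpow_mul_div_rpow {K k c p : ℝ} (hk : 0 < k) (hkK : k ≤ K)
    (hc : 0 ≤ c) (hp : 1 ≤ p) : K * c ^ (p - 1) ≤ K ^ p * (c / k) ^ (p - 1) := by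
  have hK : 0 < K := hk.trans_le hkK
  have hcK : c ≤ K * c / k := by
    rw [le_div_iff₀ hk, mul_comm]; exact mul_le_mul_of_nonneg_right hkK hc
  calc K * c ^ (p - 1) ≤ K * (K * c / k) ^ (p - 1) :=
        mul_le_mul_of_nonneg_left (rpow_le_rpow hc hcK (by linarith)) hK.le
    _ = K ^ p * (c / k) ^ (p - 1) := by
        rw [mul_div_assoc, mul_rpow hK.le (by positivity), ← mul_assoc,
          ← rpow_one_add' hK.le (by linarith)]
        ring_nf

theorem riccati_pointwise_comparison_general
    (n : ℕ) (hn : 2 ≤ n) (R : ℝ)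
    (φ ρ : ℝ → ℝ)
    (hφc : ContinuousOn φ (Set.Icc 0 R)) (hρc : ContinuousOn ρ (Set.Icc 0 R))
    (hφ0 : φ 0 = 0) (hφd : Differentiable ℝ φ)
    (hφnn : ∀ t ∈ Set.Icc (0:ℝ) R, 0 ≤ φ t)
    (hρnn : ∀ t ∈ Set.Icc (0:ℝ) R, 0 ≤ ρ t)
    (hriccati : ∀ t ∈ Set.Icc (0:ℝ) R,
      deriv φ t + (φ t) ^ 2 / ((n : ℝ) - 1) ≤ ρ t)
    (p : ℝ) (hp : p > (n : ℝ) / 2) :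
    ∀ r ∈ Set.Icc (0:ℝ) R,
      (φ r) ^ (2 * p - 1)
        ≤ (2 * p - 1) ^ p * (((n : ℝ) - 1) / (2 * p - n)) ^ (p - 1) *
            ∫ t in (0:ℝ)..r, (ρ t) ^ p := by
  intro r ⟨hr0, hrR⟩
  have hn2 : (2 : ℝ) ≤ n := by exact_mod_cast hn
  have hp1 : 1 < p := by linarith
  have hsub : Set.Icc 0 r ⊆ Set.Icc 0 R := Set.Icc_subset_Icc_right hrR
  calc φ r ^ (2 * p - 1)
      ≤ (2 * p - 1) * ((n : ℝ) - 1) ^ (p - 1) * ∫ t in (0:ℝ)..r, ρ t ^ p :=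
        rpow_le_integral_of_riccati hr0 (by linarith) hp1 (hφc.mono hsub)
          (fun t _ => hφd t) (hρc.mono hsub) hφ0 (fun t ht => hφnn t (hsub ht))
          (fun t ht => hρnn t (hsub ht)) (fun t ht => hriccati t (hsub ht))
    _ ≤ _ := mul_le_mul_of_nonneg_right
        (mul_rpow_sub_one_le_rpow_mul_div_rpow (by linarith) (by linarith) (by linarith) hp1.le)
        (integral_nonneg hr0 fun t ht => rpow_nonneg (hρnn t (hsub ht)) _)

theorem riccati_pointwise_comparison
    (n : ℕ) (hn : 2 ≤ n) (R : ℝ) (hR : 0 ≤ R)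
    (φ ρ : ℝ → ℝ)
    (hφc : ContinuousOn φ (Set.Icc 0 R)) (hρc : ContinuousOn ρ (Set.Icc 0 R))
    (hφ0 : φ 0 = 0) (hφd : Differentiable ℝ φ)
    (hφnn : ∀ t ∈ Set.Icc (0:ℝ) R, 0 ≤ φ t)
    (hρnn : ∀ t ∈ Set.Icc (0:ℝ) R, 0 ≤ ρ t)
    (hriccati : ∀ t ∈ Set.Icc (0:ℝ) R,
      deriv φ t + (φ t) ^ 2 / ((n : ℝ) - 1) ≤ ρ t)
    (p : ℝ) (hp : p > (n : ℝ) / 2) :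
    ∀ r ∈ Set.Icc (0:ℝ) R,
      (φ r) ^ (2 * p - 1)
        ≤ (2 * p - 1) ^ p * (((n : ℝ) - 1) / (2 * p - n)) ^ (p - 1) *
            ∫ t in (0:ℝ)..r, (ρ t) ^ p :=
  riccati_pointwise_comparison_general n hn R φ ρ hφc hρc hφ0 hφd hφnn hρnn hriccati p hp
end

section
/- Let m > 0, n ≥ 2, and suppose u is smooth with |∇u| = 1 along a geodesic, so that the weighted Bochner inequality gives m_f' ≤ −m_f²/(n+m−1) − Ric_f^m(∂r, ∂r), where m_f = Δ_f r. If Ric_f^m ≥ (n+m−1)H and m_H^{n+m} denotes the mean curvature of geodesic spheres in the (n+m)-dimensional space form of curvature H, satisfying (m_H^{n+m})' = −(m_H^{n+m})²/(n+m−1) − (n+m−1)H, then φ := (m_f − m_H^{n+m})₊ ≡ 0 along any minimal geodesic; more generally if φ' + φ²/(n+m−1) + 2 m_H^{n+m} φ/(n+m−1) ≤ ρ with ρ = ((n+m−1)H − λ)₊ ≥ 0, φ(0)=0, and p > (n+m)/2, then ∫₀ʳ φ^{2p} dt ≤ ((n+m−1)(2p−1)/(2p−n−m))^p ∫₀ʳ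 ρ^p dt when H ≥ 0 and r is in the range where m_H^{n+m} ≥ 0. -/
/-! Dropping the nonnegative term `2 m_H φ / (n+m-1)` leaves `φ' + φ² / c ≤ ρ`, `c = n+m-1`.
Multiplying by `(2p-1) φ^(2p-2)` and integrating from `φ(0) = 0` gives
`∫ φ^(2p) ≤ c ∫ ρ φ^(2p-2)`; Young's inequality splits the right side into
`c^p/p ∫ ρ^p + (p-1)/p ∫ φ^(2p)`, and absorbing the last term yields `∫ φ^(2p) ≤ c^p ∫ ρ^p`,
which is below the stated bound since `n + m ≥ 1`. When `ρ ≡ 0` the inequality makes `φ`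
nonincreasing, hence `φ ≡ 0`. -/

open Real intervalIntegral Set

theorem mul_rpow_two_mul_sub_two_le {c p x y : ℝ} (hc : 0 < c) (hp : 1 < p) (hx : 0 ≤ x)
    (hy : 0 ≤ y) :
    x * y ^ (2 * p - 2) ≤ c ^ (p - 1) / p * x ^ p + (p - 1) / (c * p) * y ^ (2 * p) := by
  have hp1 : p - 1 ≠ 0 := sub_ne_zero.mpr hp.ne'
  have hp0 : p ≠ 0 := by positivity
  have hpq : p.HolderConjugate (p / (p - 1)) :=
    holderConjugate_iff.mpr ⟨hp, by field_simp; ring⟩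
  have young := young_inequality_of_nonneg (a := x * c ^ ((p - 1) / p))
    (b := c ^ (-((p - 1) / p)) * y ^ (2 * p - 2))
    (by positivity) (by positivity) hpq
  have hab : x * c ^ ((p - 1) / p) * (c ^ (-((p - 1) / p)) * y ^ (2 * p - 2))
      = x * y ^ (2 * p - 2) := by
    rw [mul_assoc x, ← mul_assoc (c ^ _), ← rpow_add hc]
    norm_num
  have ha : (x * c ^ ((p - 1) / p)) ^ p = x ^ p * c ^ (p - 1) := by
    rw [mul_rpow hx (by positivity), ← rpow_mul hc.le]
    field_simp
  have hb : (c ^ (-((p - 1) / p)) * y ^ (2 * p - 2)) ^ (p / (p - 1)) = c⁻¹ * y ^ (2 * p) := by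
    rw [mul_rpow (by positivity) (by positivity), ← rpow_mul hc.le, ← rpow_mul hy,
      ← rpow_neg_one]
    congr 2 <;> field_simp
  rw [hab, ha, hb] at young
  calc x * y ^ (2 * p - 2)
      ≤ x ^ p * c ^ (p - 1) / p + c⁻¹ * y ^ (2 * p) / (p / (p - 1)) := young
    _ = c ^ (p - 1) / p * x ^ p + (p - 1) / (c * p) * y ^ (2 * p) := by field_simp

section Riccati

variable {φ ρ : ℝ → ℝ} {a b c p : ℝ}

theorem rpow_mul_deriv_le_of_riccati {t : ℝ} (hφ : 0 ≤ φ t) (hp : 1 ≤ p)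
    (hric : deriv φ t + φ t ^ 2 / c ≤ ρ t) :
    (2 * p - 1) * φ t ^ (2 * p - 1 - 1) * deriv φ t
      ≤ (2 * p - 1) * (ρ t * φ t ^ (2 * p - 2) - φ t ^ (2 * p) / c) := by
  have hsplit : φ t ^ (2 * p) = φ t ^ (2 * p - 2) * φ t ^ 2 := by
    rw [← rpow_two, ← rpow_add' hφ (by linarith)]
    ring_nf
  have hweight : 0 ≤ (2 * p - 1) * φ t ^ (2 * p - 2) :=
    mul_nonneg (by linarith) (rpow_nonneg hφ _)
  rw [show 2 * p - 1 - 1 = 2 * p - 2 by ring, hsplit]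
  calc (2 * p - 1) * φ t ^ (2 * p - 2) * deriv φ t
      ≤ (2 * p - 1) * φ t ^ (2 * p - 2) * (ρ t - φ t ^ 2 / c) :=
        mul_le_mul_of_nonneg_left (by linarith) hweight
    _ = _ := by ring

theorem integral_rpow_two_mul_le_of_riccati_s15 (hc : 0 < c) (hp : 1 ≤ p) (hab : a ≤ b)
    (hφc : ContinuousOn φ (Icc a b)) (hφd : ∀ t ∈ Ioo a b, DifferentiableAt ℝ φ t)
    (hρc : ContinuousOn ρ (Icc a b)) (hφa : φ a = 0) (hφnn : ∀ t ∈ Icc a b, 0 ≤ φ t)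
    (hric : ∀ t ∈ Ioo a b, deriv φ t + φ t ^ 2 / c ≤ ρ t) :
    ∫ t in a..b, φ t ^ (2 * p) ≤ c * ∫ t in a..b, ρ t * φ t ^ (2 * p - 2) := by
  have hq : 1 ≤ 2 * p - 1 := by linarith
  have hpow : ∀ q : ℝ, 0 ≤ q → ContinuousOn (fun t => φ t ^ q) (Icc a b) :=
    fun _ hq_nonneg => hφc.rpow_const fun _ _ => Or.inr hq_nonneg
  have hint_mul : IntervalIntegrable (fun t => ρ t * φ t ^ (2 * p - 2))
      MeasureTheory.volume a b :=
    (hρc.mul (hpow _ (by linarith))).intervalIntegrable_of_Icc hab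
  have hint_pow : IntervalIntegrable (fun t => φ t ^ (2 * p))
      MeasureTheory.volume a b :=
    (hpow _ (by linarith)).intervalIntegrable_of_Icc hab
  have hFTC := sub_le_integral_of_hasDeriv_right_of_le hab (hpow _ (by linarith))
    (φ := fun t => (2 * p - 1) * (ρ t * φ t ^ (2 * p - 2) - φ t ^ (2 * p) / c))
    (fun t ht => ((hasDerivAt_rpow_const (Or.inr hq)).comp t
      (hφd t ht).hasDerivAt).hasDerivWithinAt)
    ((continuousOn_const.mul ((hρc.mul (hpow _ (by linarith))).sub
      ((hpow _ (by linarith)).div_const c))).integrableOn_Icc)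
    fun t ht => rpow_mul_deriv_le_of_riccati (hφnn t (Ioo_subset_Icc_self ht)) hp (hric t ht)
  rw [hφa, zero_rpow (by linarith), sub_zero, integral_const_mul,
    integral_sub hint_mul (hint_pow.div_const c), integral_div] at hFTC
  have hφb : 0 ≤ φ b ^ (2 * p - 1) := rpow_nonneg (hφnn b ⟨hab, le_rfl⟩) _
  have hdiff := nonneg_of_mul_nonneg_right (hφb.trans hFTC) (by linarith)
  rw [sub_nonneg, div_le_iff₀ hc] at hdiff
  linarith

theorem integral_rpow_two_mul_le_rpow_mul_integral_rpow (hc : 0 < c) (hp : 1 < p) (hab : a ≤ b)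
    (hφc : ContinuousOn φ (Icc a b)) (hφd : ∀ t ∈ Ioo a b, DifferentiableAt ℝ φ t)
    (hρc : ContinuousOn ρ (Icc a b)) (hφa : φ a = 0) (hφnn : ∀ t ∈ Icc a b, 0 ≤ φ t)
    (hρnn : ∀ t ∈ Icc a b, 0 ≤ ρ t)
    (hric : ∀ t ∈ Ioo a b, deriv φ t + φ t ^ 2 / c ≤ ρ t) :
    ∫ t in a..b, φ t ^ (2 * p) ≤ c ^ p * ∫ t in a..b, ρ t ^ p := by
  have hint_mul : IntervalIntegrable (fun t => ρ t * φ t ^ (2 * p - 2))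
      MeasureTheory.volume a b :=
    (hρc.mul (hφc.rpow_const fun _ _ => Or.inr (by linarith))).intervalIntegrable_of_Icc hab
  have hint_ρ : IntervalIntegrable (fun t => ρ t ^ p)
      MeasureTheory.volume a b :=
    (hρc.rpow_const fun _ _ => Or.inr (by linarith)).intervalIntegrable_of_Icc hab
  have hint_φ : IntervalIntegrable (fun t => φ t ^ (2 * p))
      MeasureTheory.volume a b :=
    (hφc.rpow_const fun _ _ => Or.inr (by linarith)).intervalIntegrable_of_Icc hab
  set A := ∫ t in a..b, φ t ^ (2 * p)
  set B := ∫ t in a..b, ρ t ^ p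
  have hA : A ≤ c * ∫ t in a..b, ρ t * φ t ^ (2 * p - 2) :=
    integral_rpow_two_mul_le_of_riccati_s15 hc hp.le hab hφc hφd hρc hφa hφnn hric
  have hyoung :
      ∫ t in a..b, ρ t * φ t ^ (2 * p - 2) ≤ c ^ (p - 1) / p * B + (p - 1) / (c * p) * A := by
    rw [← integral_const_mul, ← integral_const_mul,
      ← integral_add (hint_ρ.const_mul _) (hint_φ.const_mul _)]
    exact integral_mono_on hab hint_mul ((hint_ρ.const_mul _).add (hint_φ.const_mul _))
      fun t ht => mul_rpow_two_mul_sub_two_le hc hp (hρnn t ht) (hφnn t ht)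
  have habsorb : A ≤ (c ^ p * B + (p - 1) * A) / p := by
    calc A ≤ c * (c ^ (p - 1) / p * B + (p - 1) / (c * p) * A) :=
          hA.trans (mul_le_mul_of_nonneg_left hyoung hc.le)
      _ = (c ^ p * B + (p - 1) * A) / p := by
          rw [rpow_sub_one hc.ne']
          field_simp
  rw [le_div_iff₀ (by linarith)] at habsorb
  linarith

end Riccati

theorem eqOn_zero_of_deriv_nonpos {φ : ℝ → ℝ} {a b : ℝ} (hφc : ContinuousOn φ (Icc a b))
    (hφd : ∀ t ∈ Ioo a b, DifferentiableAt ℝ φ t) (hφ' : ∀ t ∈ Ioo a b, deriv φ t ≤ 0)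
    (hφa : φ a = 0) (hφnn : ∀ t ∈ Icc a b, 0 ≤ φ t) : ∀ t ∈ Icc a b, φ t = 0 := by
  have hanti : AntitoneOn φ (Icc a b) :=
    antitoneOn_of_deriv_nonpos (convex_Icc a b) hφc
      (fun t ht => (hφd t (by rwa [interior_Icc] at ht)).differentiableWithinAt)
      (fun t ht => hφ' t (by rwa [interior_Icc] at ht))
  intro t ht
  exact le_antisymm (hφa ▸ hanti ⟨le_rfl, ht.1.trans ht.2⟩ ht ht.1) (hφnn t ht)

theorem m_bakry_emery_riccati_comparison_general
    (m : ℝ) (hm : 0 < m) (n : ℕ) (hn : 2 ≤ n)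
    (r : ℝ) (hr : 0 ≤ r)
    (φ ρ mHnm : ℝ → ℝ)
    (hφc : ContinuousOn φ (Set.Icc 0 r)) (hρc : ContinuousOn ρ (Set.Icc 0 r))
    (hφd : Differentiable ℝ φ) (hφ0 : φ 0 = 0)
    (hφnn : ∀ t ∈ Set.Icc (0:ℝ) r, 0 ≤ φ t)
    (hρnn : ∀ t ∈ Set.Icc (0:ℝ) r, 0 ≤ ρ t)
    (hmHnn : ∀ t ∈ Set.Ioc (0:ℝ) r, 0 ≤ mHnm t)
    (hriccati : ∀ t ∈ Set.Ioc (0:ℝ) r,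
      deriv φ t + (φ t) ^ 2 / ((n : ℝ) + m - 1)
        + 2 * mHnm t * φ t / ((n : ℝ) + m - 1) ≤ ρ t)
    (p : ℝ) (hp : p > ((n : ℝ) + m) / 2) :
    (∫ t in (0:ℝ)..r, (φ t) ^ (2 * p)
        ≤ (((n : ℝ) + m - 1) * (2 * p - 1) / (2 * p - n - m)) ^ p *
            ∫ t in (0:ℝ)..r, (ρ t) ^ p) ∧
    ((∀ t ∈ Set.Icc (0:ℝ) r, ρ t = 0) → ∀ t ∈ Set.Icc (0:ℝ) r, φ t = 0) := by
  have hn2 : (2 : ℝ) ≤ n := by exact_mod_cast hn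
  have hc : 0 < (n : ℝ) + m - 1 := by linarith
  have hric : ∀ t ∈ Ioo 0 r, deriv φ t + φ t ^ 2 / ((n : ℝ) + m - 1) ≤ ρ t := fun t ht => by
    have hmH : 0 ≤ 2 * mHnm t * φ t / ((n : ℝ) + m - 1) :=
      div_nonneg (mul_nonneg (mul_nonneg zero_le_two (hmHnn t (Ioo_subset_Ioc_self ht)))
        (hφnn t (Ioo_subset_Icc_self ht))) hc.le
    linarith [hriccati t (Ioo_subset_Ioc_self ht)]
  have hconst :
      ((n : ℝ) + m - 1) ^ p ≤ (((n : ℝ) + m - 1) * (2 * p - 1) / (2 * p - n - m)) ^ p := by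
    refine rpow_le_rpow hc.le ?_ (by linarith)
    rw [le_div_iff₀ (by linarith)]
    nlinarith
  refine ⟨?_, fun hρ0 =>
    eqOn_zero_of_deriv_nonpos hφc (fun t _ => hφd t) (fun t ht => ?_) hφ0 hφnn⟩
  · exact (integral_rpow_two_mul_le_rpow_mul_integral_rpow hc (by linarith) hr hφc
      (fun t _ => hφd t) hρc hφ0 hφnn hρnn hric).trans <| mul_le_mul_of_nonneg_right hconst <|
        integral_nonneg hr fun t ht => rpow_nonneg (hρnn t ht) p
  · have := hric t ht
    rw [hρ0 t (Ioo_subset_Icc_self ht)] at this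
    linarith [div_nonneg (sq_nonneg (φ t)) hc.le]

theorem m_bakry_emery_riccati_comparison
    (m : ℝ) (hm : 0 < m) (n : ℕ) (hn : 2 ≤ n)
    (H r : ℝ) (hH : 0 ≤ H) (hr : 0 ≤ r)
    (φ ρ mHnm : ℝ → ℝ)
    (hφc : ContinuousOn φ (Set.Icc 0 r)) (hρc : ContinuousOn ρ (Set.Icc 0 r))
    (hφd : Differentiable ℝ φ) (hφ0 : φ 0 = 0)
    (hφnn : ∀ t ∈ Set.Icc (0:ℝ) r, 0 ≤ φ t)
    (hρnn : ∀ t ∈ Set.Icc (0:ℝ) r, 0 ≤ ρ t)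
    (hmH' : ∀ t ∈ Set.Ioc (0:ℝ) r,
      deriv mHnm t = -(mHnm t) ^ 2 / ((n : ℝ) + m - 1) - ((n : ℝ) + m - 1) * H)
    (hmHnn : ∀ t ∈ Set.Ioc (0:ℝ) r, 0 ≤ mHnm t)
    (hriccati : ∀ t ∈ Set.Ioc (0:ℝ) r,
      deriv φ t + (φ t) ^ 2 / ((n : ℝ) + m - 1)
        + 2 * mHnm t * φ t / ((n : ℝ) + m - 1) ≤ ρ t)
    (p : ℝ) (hp : p > ((n : ℝ) + m) / 2) :
    (∫ t in (0:ℝ)..r, (φ t) ^ (2 * p)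
        ≤ (((n : ℝ) + m - 1) * (2 * p - 1) / (2 * p - n - m)) ^ p *
            ∫ t in (0:ℝ)..r, (ρ t) ^ p) ∧
    ((∀ t ∈ Set.Icc (0:ℝ) r, ρ t = 0) → ∀ t ∈ Set.Icc (0:ℝ) r, φ t = 0) :=
  m_bakry_emery_riccati_comparison_general m hm n hn r hr φ ρ mHnm hφc hρc hφd hφ0 hφnn hρnn hmHnn
    hriccati p hp
end
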